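/- arXiv:1909.03612 — 2 statements merged into one kernel-verified Lean document; each statement's English description precedes it below -/
import Mathlib

section
/- Let G be a discrete groupoid with unit space G⁰ and let f : G → ℂ be finitely supported. Then ‖f‖_∞ ≤ sup_{x ∈ G⁰} ‖π_x(f)‖, where π_x(f) is the operator of left convolution by f on ℓ^p(Gx). Moreover, if f is supported on G⁰, then sup_x ‖π_x(f)‖ = ‖f‖_∞. -/
open CategoryTheory
open scoped ENNReal

/-- The set of arrows of a (discrete) groupoid with object type `Ob`. -/
abbrev GrpdArr (Ob : Type*) [Groupoid Ob] := Σ (a : Ob) (b : Ob), a ⟶ b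

/-- The arrows with domain `x`. -/
abbrev GrpdSrc (Ob : Type*) [Groupoid Ob] (x : Ob) := Σ b : Ob, x ⟶ b

/-- An arrow is a unit if it is an identity arrow. -/
def IsUnitArrow {Ob : Type*} [Groupoid Ob] (γ : GrpdArr Ob) : Prop :=
  ∃ a : Ob, γ = ⟨a, a, 𝟙 a⟩

/-!
Testing `π_x(f)` on the point mass `δ_x` gives `π_x(f) δ_x = f` on `Gx`, so
`‖f γ‖ ≤ ‖π_{dom γ}(f)‖`. The supremum of the `‖π_x(f)‖` is finite because
`π_x(f) = ∑ α, f α • λ_α` is a finite sum of partial translations `(λ_α ξ)(γ) = ξ(α⁻¹γ)`,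
each a contraction of `ℓ^p`. If `f` lives on the units, `π_x(f)` multiplies `ξ γ` by
`f(1_{r(γ)})`, so its norm is at most `‖f‖_∞`.
-/

section
open Function

theorem finsum_mul_eq_sum_mul_extend {κ A R : Type*} [NonUnitalNonAssocSemiring R]
    {Φ : κ → A} (hΦ : Injective Φ) (F : A → R) {S : Finset A} (hS : support F ⊆ S)
    (ξ : κ → R) : ∑ᶠ k, F (Φ k) * ξ k = ∑ α ∈ S, F α * extend Φ ξ 0 α := by
  have hrange : support (fun α => F α * extend Φ ξ 0 α) ⊆ Set.range Φ := fun α hα => by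
    by_contra h
    exact hα (by simp only [extend_apply' _ _ _ h, Pi.zero_apply, mul_zero])
  calc ∑ᶠ k, F (Φ k) * ξ k = ∑ᶠ k, F (Φ k) * extend Φ ξ 0 (Φ k) := by
        simp only [hΦ.extend_apply]
    _ = ∑ᶠ α ∈ Set.range Φ, F α * extend Φ ξ 0 α :=
        (finsum_mem_range (f := fun α => F α * extend Φ ξ 0 α) hΦ).symm
    _ = ∑ᶠ α, F α * extend Φ ξ 0 α := by rw [finsum_mem_def, Set.indicator_eq_self.2 hrange]
    _ = ∑ α ∈ S, F α * extend Φ ξ 0 α :=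
        finsum_eq_sum_of_support_subset _ ((support_mul_subset_left _ _).trans hS)

/-- For fixed `a`, the pairs with `Φ i k = a` form the graph of a partial injection `ι ⇀ κ`,
and `η` is `ξ` pulled back along it. -/
theorem exists_lp_eq_extend_norm_le {ι κ A E : Type*} [NormedAddCommGroup E] {p : ℝ≥0∞}
    (hp : p ≠ 0) {Φ : ι → κ → A} (hΦ : ∀ i, Injective (Φ i))
    (hΦ' : ∀ k, Injective (Φ · k)) (ξ : lp (fun _ : κ => E) p) (a : A) :
    ∃ η : lp (fun _ : ι => E) p, (∀ i, η i = extend (Φ i) ξ 0 a) ∧ ‖η‖ ≤ ‖ξ‖ := by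
  rcases isEmpty_or_nonempty κ with hκ | hκ
  · refine ⟨0, fun i => ?_, by simpa using lp.norm_nonneg' ξ⟩
    rw [extend_apply' _ _ _ fun h => isEmptyElim h.choose, lp.coeFn_zero]; rfl
  set v : ι → E := fun i => extend (Φ i) ξ 0 a
  set g : ι → κ := fun i => invFun (Φ i) a
  have hv_of_mem : ∀ i, a ∈ Set.range (Φ i) → v i = ξ (g i) := by
    rintro i ⟨k, rfl⟩
    simp only [v, g, (hΦ i).extend_apply, leftInverse_invFun (hΦ i) k]
  have hv_of_not_mem : ∀ i, a ∉ Set.range (Φ i) → v i = 0 := fun i ha =>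
    extend_apply' _ _ _ ha
  have hv_le : ∀ i, ‖v i‖ ≤ ‖ξ‖ := fun i => by
    by_cases ha : a ∈ Set.range (Φ i)
    · rw [hv_of_mem i ha]; exact lp.norm_apply_le_norm hp ξ _
    · rw [hv_of_not_mem i ha, norm_zero]; exact lp.norm_nonneg' ξ
  obtain rfl | hpfin := eq_or_ne p ∞
  · exact ⟨⟨v, memℓp_infty ⟨‖ξ‖, by rintro - ⟨i, rfl⟩; exact hv_le i⟩⟩, fun _ => rfl,
      lp.norm_le_of_forall_le (lp.norm_nonneg' ξ) hv_le⟩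
  have hpr : 0 < p.toReal := ENNReal.toReal_pos hp hpfin
  have hsum : ∀ s : Finset ι, ∑ i ∈ s, ‖v i‖ ^ p.toReal ≤ ‖ξ‖ ^ p.toReal := fun s => by
    classical
    set s' := s.filter (fun i => a ∈ Set.range (Φ i))
    have hinj : Set.InjOn g s' := fun i hi j hj hij => by
      have hi' : Φ i (g i) = a := invFun_eq (Finset.mem_filter.1 hi).2
      have hj' : Φ j (g j) = a := invFun_eq (Finset.mem_filter.1 hj).2
      rw [hij] at hi'
      exact hΦ' (g j) (hi'.trans hj'.symm)
    calc ∑ i ∈ s, ‖v i‖ ^ p.toReal = ∑ i ∈ s', ‖v i‖ ^ p.toReal := by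
          refine (Finset.sum_filter_of_ne fun i _ h => ?_).symm
          by_contra ha
          rw [hv_of_not_mem i ha, norm_zero, Real.zero_rpow hpr.ne'] at h
          exact h rfl
      _ = ∑ i ∈ s', ‖ξ (g i)‖ ^ p.toReal :=
          Finset.sum_congr rfl fun i hi => by rw [hv_of_mem i (Finset.mem_filter.1 hi).2]
      _ = ∑ k ∈ s'.image g, ‖ξ k‖ ^ p.toReal :=
          (Finset.sum_image (f := fun k => ‖ξ k‖ ^ p.toReal) hinj).symm
      _ ≤ ‖ξ‖ ^ p.toReal := lp.sum_rpow_le_norm_rpow hpr ξ _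
  exact ⟨⟨v, memℓp_gen' hsum⟩, fun _ => rfl,
    lp.norm_le_of_forall_sum_le hpr (lp.norm_nonneg' ξ) hsum⟩

end

namespace GrpdSrc

variable {Ob : Type*} [Groupoid Ob] {x : Ob}

/-- `γ σ⁻¹` in the paper's notation. -/
def mulInv (γ σ : GrpdSrc Ob x) : GrpdArr Ob := ⟨σ.1, γ.1, Groupoid.inv σ.2 ≫ γ.2⟩

theorem mulInv_right_injective (γ : GrpdSrc Ob x) : Function.Injective (mulInv γ) := by
  rintro ⟨a, σ⟩ ⟨a', σ'⟩ h
  obtain ⟨rfl, h⟩ := Sigma.mk.inj_iff.1 h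
  have h := (cancel_mono γ.2).1 (eq_of_heq (Sigma.mk.inj_iff.1 (eq_of_heq h)).2)
  simp only [Groupoid.inv_eq_inv, IsIso.inv_eq_inv] at h
  rw [h]

theorem mulInv_left_injective (σ : GrpdSrc Ob x) : Function.Injective (mulInv · σ) := by
  rintro ⟨c, γ⟩ ⟨c', γ'⟩ h
  obtain ⟨-, h⟩ := Sigma.mk.inj_iff.1 h
  obtain ⟨rfl, h⟩ := Sigma.mk.inj_iff.1 (eq_of_heq h)
  simpa using eq_of_heq h

@[simp]
theorem mulInv_self (γ : GrpdSrc Ob x) : mulInv γ γ = ⟨γ.1, γ.1, 𝟙 γ.1⟩ := by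
  simp [mulInv]

@[simp]
theorem mulInv_id (γ : GrpdSrc Ob x) : mulInv γ ⟨x, 𝟙 x⟩ = ⟨x, γ.1, γ.2⟩ := by
  simp [mulInv]

theorem eq_of_isUnitArrow_mulInv {γ σ : GrpdSrc Ob x} (h : IsUnitArrow (mulInv γ σ)) : σ = γ := by
  obtain ⟨a, ha⟩ := h
  obtain rfl : a = γ.1 := (congrArg (·.2.1) ha).symm
  exact mulInv_right_injective γ (ha.trans (mulInv_self γ).symm)

/-- `T = π_x(f)` in the paper's notation. -/
def IsLeftConvolution {𝕜 : Type*} [NontriviallyNormedField 𝕜] {p : ℝ≥0∞} [Fact (1 ≤ p)]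
    (f : GrpdArr Ob → 𝕜)
    (T : lp (fun _ : GrpdSrc Ob x => 𝕜) p →L[𝕜] lp (fun _ : GrpdSrc Ob x => 𝕜) p) : Prop :=
  ∀ ξ γ, T ξ γ = ∑ᶠ σ, f (mulInv γ σ) * ξ σ

namespace IsLeftConvolution

variable {𝕜 : Type*} [NontriviallyNormedField 𝕜] {p : ℝ≥0∞} [Fact (1 ≤ p)]
  {f : GrpdArr Ob → 𝕜} {T : lp (fun _ : GrpdSrc Ob x => 𝕜) p →L[𝕜] lp (fun _ : GrpdSrc Ob x => 𝕜) p}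

theorem norm_le_opNorm (hT : IsLeftConvolution f T) {b : Ob} (g : x ⟶ b) :
    ‖f ⟨x, b, g⟩‖ ≤ ‖T‖ := by
  classical
  have hp : 0 < p := zero_lt_one.trans_le Fact.out
  set δ : lp (fun _ : GrpdSrc Ob x => 𝕜) p := lp.single p ⟨x, 𝟙 x⟩ 1
  have hTδ : T δ ⟨b, g⟩ = f ⟨x, b, g⟩ := by
    rw [hT, finsum_eq_single _ ⟨x, 𝟙 x⟩ fun σ hσ => by rw [lp.single_apply_ne p _ _ hσ, mul_zero],
      lp.single_apply_self, mul_one, mulInv_id]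
  calc ‖f ⟨x, b, g⟩‖ = ‖T δ ⟨b, g⟩‖ := by rw [hTδ]
    _ ≤ ‖T δ‖ := lp.norm_apply_le_norm hp.ne' _ _
    _ ≤ ‖T‖ * ‖δ‖ := T.le_opNorm δ
    _ = ‖T‖ := by rw [lp.norm_single hp, norm_one, mul_one]

theorem opNorm_le_sum (hT : IsLeftConvolution f T) {S : Finset (GrpdArr Ob)}
    (hS : Function.support f ⊆ S) : ‖T‖ ≤ ∑ α ∈ S, ‖f α‖ := by
  refine T.opNorm_le_bound (by positivity) fun ξ => ?_
  have hp : p ≠ 0 := (zero_lt_one.trans_le Fact.out).ne'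
  choose η hη hηξ using
    exists_lp_eq_extend_norm_le hp mulInv_right_injective mulInv_left_injective ξ
  have hTξ : T ξ = ∑ α ∈ S, f α • η α := lp.ext <| funext fun γ => by
    rw [hT, finsum_mul_eq_sum_mul_extend (mulInv_right_injective γ) f hS, lp.coeFn_sum,
      Finset.sum_apply]
    simp only [lp.coeFn_smul, Pi.smul_apply, smul_eq_mul, hη]
  calc ‖T ξ‖ ≤ ∑ α ∈ S, ‖f α • η α‖ := hTξ ▸ norm_sum_le _ _
    _ ≤ ∑ α ∈ S, ‖f α‖ * ‖ξ‖ := Finset.sum_le_sum fun α _ => by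
        rw [norm_smul]; gcongr; exact hηξ α
    _ = (∑ α ∈ S, ‖f α‖) * ‖ξ‖ := (Finset.sum_mul ..).symm

theorem apply_of_isUnitArrow (hT : IsLeftConvolution f T)
    (hf : ∀ γ, f γ ≠ 0 → IsUnitArrow γ) (ξ : lp (fun _ : GrpdSrc Ob x => 𝕜) p)
    (γ : GrpdSrc Ob x) : T ξ γ = f ⟨γ.1, γ.1, 𝟙 γ.1⟩ * ξ γ := by
  rw [hT, finsum_eq_single _ γ fun σ hσ => ?_, mulInv_self]
  by_contra h
  exact hσ (eq_of_isUnitArrow_mulInv (hf _ (left_ne_zero_of_mul h)))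

theorem opNorm_le_of_isUnitArrow (hT : IsLeftConvolution f T)
    (hf : ∀ γ, f γ ≠ 0 → IsUnitArrow γ) {M : ℝ} (hM : ∀ γ, ‖f γ‖ ≤ M) (hM₀ : 0 ≤ M) :
    ‖T‖ ≤ M := by
  refine T.opNorm_le_bound hM₀ fun ξ => ?_
  have hp : p ≠ 0 := (zero_lt_one.trans_le Fact.out).ne'
  calc ‖T ξ‖ ≤ ‖M • lp.toNorm ξ‖ := lp.norm_mono hp fun γ => by
        rw [hT.apply_of_isUnitArrow hf, lp.coeFn_smul, Pi.smul_apply, lp.toNorm_coe, norm_mul,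
          smul_eq_mul, norm_mul, norm_norm, Real.norm_of_nonneg hM₀]
        exact mul_le_mul_of_nonneg_right (hM _) (norm_nonneg _)
    _ = M * ‖ξ‖ := by rw [norm_smul, lp.norm_toNorm, Real.norm_of_nonneg hM₀]

end IsLeftConvolution

end GrpdSrc

theorem stmt_9_general {Ob : Type*} [Groupoid Ob] (p : ℝ≥0∞) [Fact (1 ≤ p)]
    (f : GrpdArr Ob → ℂ) (hf : (Function.support f).Finite)
    (T : ∀ x : Ob, lp (fun _ : GrpdSrc Ob x => ℂ) p →L[ℂ] lp (fun _ : GrpdSrc Ob x => ℂ) p)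
    (hT : ∀ (x : Ob) (ξ : lp (fun _ : GrpdSrc Ob x => ℂ) p) (γ : GrpdSrc Ob x),
      (T x ξ : ∀ _ : GrpdSrc Ob x, ℂ) γ =
        ∑ᶠ σ : GrpdSrc Ob x, f ⟨σ.1, γ.1, Groupoid.inv σ.2 ≫ γ.2⟩ * (ξ : ∀ _, ℂ) σ) :
    (⨆ γ : GrpdArr Ob, ‖f γ‖) ≤ (⨆ x : Ob, ‖T x‖) ∧
      ((∀ γ : GrpdArr Ob, f γ ≠ 0 → IsUnitArrow γ) →
        (⨆ x : Ob, ‖T x‖) = ⨆ γ : GrpdArr Ob, ‖f γ‖) := by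
  have hconv : ∀ x, GrpdSrc.IsLeftConvolution f (T x) := hT
  have hTbdd : BddAbove (Set.range fun x => ‖T x‖) :=
    ⟨_, Set.forall_mem_range.2 fun x => (hconv x).opNorm_le_sum hf.coe_toFinset.ge⟩
  have hf_le : ∀ γ, ‖f γ‖ ≤ ⨆ x, ‖T x‖ := fun ⟨a, _, g⟩ =>
    ((hconv a).norm_le_opNorm g).trans (le_ciSup hTbdd a)
  have hsup_le : (⨆ γ, ‖f γ‖) ≤ ⨆ x, ‖T x‖ :=
    Real.iSup_le hf_le (Real.iSup_nonneg fun x => norm_nonneg _)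
  refine ⟨hsup_le, fun hunit => le_antisymm ?_ hsup_le⟩
  have hfbdd : BddAbove (Set.range fun γ => ‖f γ‖) := ⟨_, Set.forall_mem_range.2 hf_le⟩
  have hsup₀ : 0 ≤ ⨆ γ, ‖f γ‖ := Real.iSup_nonneg fun γ => norm_nonneg _
  exact Real.iSup_le (fun x => (hconv x).opNorm_le_of_isUnitArrow hunit (le_ciSup hfbdd) hsup₀)
    hsup₀

/-- For a finitely supported `f` on a discrete groupoid,
`‖f‖_∞ ≤ sup_x ‖π_x(f)‖` where `π_x(f)` is left convolution by `f` on `ℓ^p(Gx)`;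
moreover if `f` is supported on the unit space then equality holds. -/
theorem stmt_9 {Ob : Type*} [Groupoid Ob] (p : ℝ≥0∞) [Fact (1 ≤ p)] (hp' : p ≠ ∞)
    (f : GrpdArr Ob → ℂ) (hf : (Function.support f).Finite)
    (T : ∀ x : Ob, lp (fun _ : GrpdSrc Ob x => ℂ) p →L[ℂ] lp (fun _ : GrpdSrc Ob x => ℂ) p)
    (hT : ∀ (x : Ob) (ξ : lp (fun _ : GrpdSrc Ob x => ℂ) p) (γ : GrpdSrc Ob x),
      (T x ξ : ∀ _ : GrpdSrc Ob x, ℂ) γ =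
        ∑ᶠ σ : GrpdSrc Ob x, f ⟨σ.1, γ.1, Groupoid.inv σ.2 ≫ γ.2⟩ * (ξ : ∀ _, ℂ) σ) :
    (⨆ γ : GrpdArr Ob, ‖f γ‖) ≤ (⨆ x : Ob, ‖T x‖) ∧
      ((∀ γ : GrpdArr Ob, f γ ≠ 0 → IsUnitArrow γ) →
        (⨆ x : Ob, ‖T x‖) = ⨆ γ : GrpdArr Ob, ‖f γ‖) :=
  stmt_9_general p f hf T hT
end

section
/- The kernel of the canonical surjective homomorphism ℤ/2 ∗ ℤ/3 → ℤ/2 × ℤ/3 is a free group of rank 2; in particular, the free group F₂ embeds as a finite-index (index 6) normal subgroup of ℤ/2 ∗ ℤ/3. -/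
/-!
Reidemeister–Schreier, made concrete. Let `Q = ℤ/2 × ℤ/3` and take the transversal
`(a, b) ↦ y^b x^a` of the kernel `K`. Recording, for each `g`, the permutation it induces on the
six cosets together with its Schreier cocycle `q ↦ r(q)⁻¹ g r(π(g)⁻¹ q) ∈ K`, written as a word
in `F₂`, gives a homomorphism `Ψ : ℤ/2 ∗ ℤ/3 → F₂ ≀ Q`.
Reading off the cocycle at the trivial coset is then a homomorphism `K → F₂` that is inverse to
`F₂ → K`, `a ↦ [x, y]`, `b ↦ [x, y²]`: one composite is the identity because the cocycle
identity holds on the generators `x`, `y`, the other by computation on `a` and `b`.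
-/

open Monoid
open scoped Monoid.Coprod

/-- The canonical homomorphism `ℤ/2 ∗ ℤ/3 → ℤ/2 × ℤ/3` from the free product to
the direct product. -/
noncomputable def canonicalHom :
    (Multiplicative (ZMod 2) ∗ Multiplicative (ZMod 3)) →*
      Multiplicative (ZMod 2) × Multiplicative (ZMod 3) :=
  Coprod.lift (MonoidHom.inl _ _) (MonoidHom.inr _ _)

namespace RegularWreathProduct

variable {G Q F : Type*} [Group G] [Group Q] [Group F]

/-- `g` lies in it when `(Ψ g).left` is the Schreier cocycle of `g` with respect to the
transversal `r`, read in `G` through `φ`. -/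
def schreierSubmonoid (Ψ : G →* F ≀ᵣ Q) (r : Q → G) (φ : F →* G) : Submonoid G where
  carrier := {g | ∀ q, g * r ((Ψ g).right⁻¹ * q) = r q * φ ((Ψ g).left q)}
  one_mem' q := by simp
  mul_mem' {g h} hg hh q := by
    simp only [Set.mem_ofPred_eq, map_mul, mul_right, mul_left, Pi.mul_apply, mul_inv_rev,
      mul_assoc] at hg hh ⊢
    rw [hh, ← mul_assoc, hg, mul_assoc]

def kerLeftHom (π : G →* Q) (Ψ : G →* F ≀ᵣ Q) (hΨ : ∀ g, (Ψ g).right = π g) :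
    π.ker →* F where
  toFun k := (Ψ k).left 1
  map_one' := by simp
  map_mul' k l := by simp [hΨ, MonoidHom.mem_ker.mp k.2]

@[simp]
theorem kerLeftHom_apply (π : G →* Q) (Ψ : G →* F ≀ᵣ Q) (hΨ : ∀ g, (Ψ g).right = π g)
    (k : π.ker) : kerLeftHom π Ψ hΨ k = (Ψ k).left 1 :=
  rfl

theorem map_kerLeftHom_of_mem {π : G →* Q} {Ψ : G →* F ≀ᵣ Q} (hΨ : ∀ g, (Ψ g).right = π g)
    {r : Q → G} (hr : r 1 = 1) {φ : F →* G} {k : π.ker}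
    (hk : (k : G) ∈ schreierSubmonoid Ψ r φ) : φ (kerLeftHom π Ψ hΨ k) = k := by
  simpa [hΨ, MonoidHom.mem_ker.mp k.2, hr] using (hk 1).symm

noncomputable def kerMulEquivFreeGroup {α : Type*} (π : G →* Q) (Ψ : G →* FreeGroup α ≀ᵣ Q)
    (hΨ : ∀ g, (Ψ g).right = π g) (r : Q → G) (hr : r 1 = 1) (φ : FreeGroup α →* G)
    (hφ : ∀ w, φ w ∈ π.ker) (hS : schreierSubmonoid Ψ r φ = ⊤)
    (hφΨ : ∀ a, (Ψ (φ (.of a))).left 1 = .of a) : π.ker ≃* FreeGroup α :=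
  MulEquiv.ofBijective (kerLeftHom π Ψ hΨ) <| by
    have hleft : (kerLeftHom π Ψ hΨ).comp (φ.codRestrict _ hφ) = .id _ :=
      FreeGroup.ext_hom _ _ hφΨ
    refine ⟨fun k l hkl => Subtype.ext ?_, fun w => ⟨_, DFunLike.congr_fun hleft w⟩⟩
    rw [← map_kerLeftHom_of_mem hΨ hr (hS ▸ Submonoid.mem_top _ : (k : G) ∈ _),
      ← map_kerLeftHom_of_mem hΨ hr (hS ▸ Submonoid.mem_top _ : (l : G) ∈ _), hkl]

end RegularWreathProduct

namespace FreeProdZMod2ZMod3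

open Multiplicative
open scoped commutatorElement

abbrev G := Multiplicative (ZMod 2) ∗ Multiplicative (ZMod 3)
abbrev Q := Multiplicative (ZMod 2) × Multiplicative (ZMod 3)
abbrev F := FreeGroup (Fin 2)

def x : G := Coprod.inl (ofAdd 1)
def y : G := Coprod.inr (ofAdd 1)

lemma x_mul_self : x * x = 1 := by
  rw [x, ← map_mul, show (ofAdd 1 * ofAdd 1 : Multiplicative (ZMod 2)) = 1 by decide, map_one]

lemma x_inv : x⁻¹ = x :=
  inv_eq_of_mul_eq_one_right x_mul_self

def transversal (q : Q) : G := Coprod.inr q.2 * Coprod.inl q.1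

lemma surjective_canonicalHom : Function.Surjective canonicalHom := fun q =>
  ⟨transversal q, by simp [transversal, canonicalHom, mul_comm]⟩

noncomputable def commutatorHom : F →* G := FreeGroup.lift ![⁅x, y⁆, ⁅x, y ^ 2⁆]

lemma commutatorHom_mem_ker (w : F) : commutatorHom w ∈ canonicalHom.ker := by
  suffices canonicalHom.comp commutatorHom = 1 from DFunLike.congr_fun this w
  refine FreeGroup.ext_hom _ _ fun i => ?_
  fin_cases i <;> simpa [commutatorHom, map_commutatorElement]
    using commutatorElement_eq_one_iff_mul_comm.mpr (mul_comm _ _)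

def commutatorWord (b : Multiplicative (ZMod 3)) : F :=
  if b = ofAdd 1 then .of 1 else if b = ofAdd 2 then .of 0 else 1

lemma commutatorHom_commutatorWord (b : Multiplicative (ZMod 3)) :
    commutatorHom (commutatorWord b) = ⁅x, (Coprod.inr b)⁻¹⁆ := by
  have hb : b = 1 ∨ b = ofAdd 1 ∨ b = ofAdd 2 := by revert b; decide
  rcases hb with rfl | rfl | rfl
  · simp +decide [commutatorWord]
  · simp [commutatorWord, commutatorHom, y, ← map_inv, ← map_pow]; rfl
  · simp [commutatorWord, commutatorHom, y, ← map_inv]; rfl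

def twist : F ≀ᵣ Q := ⟨fun q => if q.1 = 1 then 1 else commutatorWord q.2, 1⟩

/-- Conjugating the coset permutation of `x` by `twist` produces the left part
`q ↦ twist q * (twist (x⁻¹ q))⁻¹`, which is the Schreier cocycle of `x`; as a conjugate of an
involution it needs no separate check that it has order 2. -/
noncomputable def wreathHom : G →* F ≀ᵣ Q :=
  Coprod.lift ((MulAut.conj twist).toMonoidHom.comp
      (RegularWreathProduct.inl.comp (MonoidHom.inl _ _)))
    (RegularWreathProduct.inl.comp (MonoidHom.inr _ _))

lemma wreathHom_right (g : G) : (wreathHom g).right = canonicalHom g := by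
  suffices RegularWreathProduct.rightHom.comp wreathHom = canonicalHom from
    DFunLike.congr_fun this g
  ext <;> simp [wreathHom, canonicalHom, twist]

lemma wreathHom_x :
    wreathHom x = twist * RegularWreathProduct.inl (ofAdd 1, 1) * twist⁻¹ := by
  simp [wreathHom, x]

lemma wreathHom_inr (m : Multiplicative (ZMod 3)) :
    wreathHom (Coprod.inr m) = RegularWreathProduct.inl (1, m) := by
  simp [wreathHom]

local notation "S" => RegularWreathProduct.schreierSubmonoid wreathHom transversal commutatorHom

lemma inr_mem_schreierSubmonoid (m : Multiplicative (ZMod 3)) : Coprod.inr m ∈ S := by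
  intro q
  simp [wreathHom_inr, transversal, ← mul_assoc, ← map_mul]

lemma x_mem_schreierSubmonoid : x ∈ S := by
  rintro ⟨a, b⟩
  have ha : a = 1 ∨ a = ofAdd 1 := by revert a; decide
  rw [wreathHom_x]
  rcases ha with rfl | rfl <;> simp [transversal, twist, ← x.eq_def] <;>
    rw [commutatorHom_commutatorWord, commutatorElement_def]
  · group
  · calc x * Coprod.inr b = x⁻¹ * Coprod.inr b := by rw [x_inv]
      _ = Coprod.inr b * (x * x) * (Coprod.inr b)⁻¹ * x⁻¹ * Coprod.inr b := by
        rw [x_mul_self]; group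
      _ = _ := by group

lemma schreierSubmonoid_eq_top : S = ⊤ := by
  rw [eq_top_iff, ← Coprod.mclosure_range_inl_union_inr, Submonoid.closure_le]
  rintro _ (⟨a, rfl⟩ | ⟨b, rfl⟩)
  · have ha : a = 1 ∨ a = ofAdd 1 := by revert a; decide
    rcases ha with rfl | rfl
    · simp
    · exact x_mem_schreierSubmonoid
  · exact inr_mem_schreierSubmonoid b

lemma wreathHom_commutatorHom_of (i : Fin 2) :
    (wreathHom (commutatorHom (.of i))).left 1 = .of i := by
  revert i
  simp only [Fin.forall_fin_two, commutatorHom, FreeGroup.lift_apply_of, Matrix.cons_val_zero,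
    Matrix.cons_val_one, map_commutatorElement, map_pow, wreathHom_x, y, wreathHom_inr]
  decide

noncomputable def kerMulEquiv : canonicalHom.ker ≃* F :=
  RegularWreathProduct.kerMulEquivFreeGroup canonicalHom wreathHom wreathHom_right
    transversal (by simp [transversal]) commutatorHom commutatorHom_mem_ker
    schreierSubmonoid_eq_top wreathHom_commutatorHom_of

end FreeProdZMod2ZMod3

/-- The canonical homomorphism `ℤ/2 ∗ ℤ/3 → ℤ/2 × ℤ/3` is
surjective, and its kernel is a free group of rank 2 of index 6; in particular
`F₂` embeds as a finite-index (index 6) normal subgroup of `ℤ/2 ∗ ℤ/3`. -/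
theorem stmt_15 :
    Function.Surjective canonicalHom ∧
      Nonempty (canonicalHom.ker ≃* FreeGroup (Fin 2)) ∧
      canonicalHom.ker.index = 6 ∧ canonicalHom.ker.Normal := by
  have hsurj := FreeProdZMod2ZMod3.surjective_canonicalHom
  refine ⟨hsurj, ⟨FreeProdZMod2ZMod3.kerMulEquiv⟩, ?_, inferInstance⟩
  rw [Subgroup.index_ker, MonoidHom.range_eq_top_of_surjective _ hsurj, Subgroup.card_top]
  simp [Nat.card_eq_fintype_card]
end
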